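/- For every ε ∈ (0,1), the function v_ε satisfies: (i) ∫₀¹ x⁻² v_ε(x)² dx = |log ε|/2; (ii) ∫₀¹ v_ε'(x)² dx = (|log ε|/2)·(1/4 + π²/(log ε)²), where v_ε' is the derivative of v_ε (equal to 0 on (0,ε)); (iii) ∫_ε¹ v_ε''(x)²·x² dx = |log ε|/32 + π²/(4|log ε|) + π⁴/(2|log ε|³), where v_ε'' is the second derivative of v_ε on (ε,1). -/

import Mathlib

/-!
On `(ε, 1]` we have `v_ε(x) = x ^ (1/2) · sin (ω log x)` with `ω = π / log ε`. Differentiating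
`y ^ a · (α sin (ω log y) + β cos (ω log y))` gives `y ^ (a - 1)` times a function of the same
shape, so each of the three integrands is `x⁻¹ (α sin (ω log x) + β cos (ω log x))²` for suitable
`α, β`. The substitution `t = log x` turns its integral over `(ε, 1)` into one over half a period
of `sin (ω t)`, which equals `|log ε| (α² + β²) / 2`.
-/

open MeasureTheory Real Set Filter

noncomputable section

def veps (ε : ℝ) : ℝ → ℝ := fun x =>
  if x ≤ ε then 0 else Real.sqrt x * Real.sin (π * Real.log x / Real.log ε)

theorem hasDerivAt_rpow_mul_comp_log {a x s' : ℝ} {s : ℝ → ℝ} (hx : 0 < x)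
    (hs : HasDerivAt s s' (log x)) :
    HasDerivAt (fun y => y ^ a * s (log y)) (x ^ (a - 1) * (a * s (log x) + s')) x := by
  refine ((hasDerivAt_rpow_const (p := a) (Or.inl hx.ne')).mul
    (hs.comp x (hasDerivAt_log hx.ne'))).congr_deriv ?_
  rw [Function.comp_apply, rpow_sub_one hx.ne']
  field_simp

theorem integral_inv_mul_comp_log {a b : ℝ} (ha : 0 < a) (hb : 0 < b) {F : ℝ → ℝ}
    (hF : Continuous F) :
    ∫ x in a..b, x⁻¹ * F (log x) = ∫ t in log a..log b, F t := by
  have hpos : ∀ x ∈ uIcc a b, 0 < x := fun x hx => (lt_min ha hb).trans_le hx.1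
  have := intervalIntegral.integral_comp_mul_deriv (fun x hx => hasDerivAt_log (hpos x hx).ne')
    (continuousOn_inv₀.mono fun x hx => (hpos x hx).ne') hF
  simpa only [Function.comp_def, mul_comm] using this

theorem integral_sin_add_cos_sq (α β : ℝ) :
    ∫ u in (0:ℝ)..π, (α * sin u + β * cos u) ^ 2 = π / 2 * (α ^ 2 + β ^ 2) := by
  have hexp : ∀ u, (α * sin u + β * cos u) ^ 2
      = α ^ 2 * sin u ^ 2 + 2 * α * β * (sin u * cos u) + β ^ 2 * cos u ^ 2 := fun u => by ring
  simp_rw [hexp]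
  rw [intervalIntegral.integral_add (by apply Continuous.intervalIntegrable; fun_prop)
      (by apply Continuous.intervalIntegrable; fun_prop),
    intervalIntegral.integral_add (by apply Continuous.intervalIntegrable; fun_prop)
      (by apply Continuous.intervalIntegrable; fun_prop)]
  simp only [intervalIntegral.integral_const_mul, integral_sin_sq, integral_sin_mul_cos₁,
    integral_cos_sq, sin_pi, cos_pi, sin_zero, cos_zero]
  ring

theorem rpow_mul_sq {x : ℝ} (hx : 0 ≤ x) (a P : ℝ) : (x ^ a * P) ^ 2 = x ^ (2 * a) * P ^ 2 := by
  rw [mul_pow, mul_comm 2 a, ← rpow_mul_natCast hx]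
  norm_num

theorem integral_eq_of_eqOn_zero {f : ℝ → ℝ} {a b c : ℝ} (hab : a ≤ b) (hf0 : EqOn f 0 (Ioo a b))
    (hf : IntervalIntegrable f volume b c) : ∫ x in a..c, f x = ∫ x in b..c, f x := by
  have hf0' : IntervalIntegrable f volume a b :=
    (intervalIntegrable_const (c := (0 : ℝ))).congr_uIoo (uIoo_of_le hab ▸ hf0.symm)
  rw [← intervalIntegral.integral_add_adjacent_intervals hf0' hf,
    intervalIntegral.integral_congr_Ioo_of_le hab hf0]
  simp

def logTrig (ω α β x : ℝ) : ℝ := α * sin (ω * log x) + β * cos (ω * log x)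

section logTrig

variable {ω α β : ℝ}

theorem hasDerivAt_rpow_mul_logTrig {a x : ℝ} (hx : 0 < x) :
    HasDerivAt (fun y => y ^ a * logTrig ω α β y)
      (x ^ (a - 1) * logTrig ω (a * α - ω * β) (a * β + ω * α) x) x := by
  have hs : HasDerivAt (fun t => α * sin (ω * t) + β * cos (ω * t))
      (ω * (α * cos (ω * log x) - β * sin (ω * log x))) (log x) := by
    have hlin := (hasDerivAt_id (log x)).const_mul ω
    refine ((((hasDerivAt_sin _).comp _ hlin).const_mul α).add
      (((hasDerivAt_cos _).comp _ hlin).const_mul β)).congr_deriv ?_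
    simp only [id]
    ring
  refine (hasDerivAt_rpow_mul_comp_log hx hs).congr_deriv ?_
  simp only [logTrig]
  ring

theorem continuousOn_inv_mul_logTrig_sq {a b : ℝ} (ha : 0 < a) (hb : 0 < b) :
    ContinuousOn (fun x => x⁻¹ * logTrig ω α β x ^ 2) (uIcc a b) := by
  have hne : ∀ x ∈ uIcc a b, x ≠ 0 := fun x hx => ((lt_min ha hb).trans_le hx.1).ne'
  simp only [logTrig]
  fun_prop (disch := assumption)

theorem integral_inv_mul_logTrig_sq {ε : ℝ} (hε : 0 < ε) :
    ∫ x in ε..1, x⁻¹ * logTrig (π / log ε) α β x ^ 2 = -log ε / 2 * (α ^ 2 + β ^ 2) := by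
  rcases eq_or_ne ε 1 with rfl | hε1
  · simp
  have hL : log ε ≠ 0 := log_ne_zero_of_pos_of_ne_one hε hε1
  have hω : π / log ε ≠ 0 := div_ne_zero pi_ne_zero hL
  have hsub := integral_inv_mul_comp_log hε zero_lt_one
    (F := fun t => (α * sin (π / log ε * t) + β * cos (π / log ε * t)) ^ 2) (by fun_prop)
  simp only [logTrig, hsub, log_one]
  rw [intervalIntegral.integral_comp_mul_left (fun u => (α * sin u + β * cos u) ^ 2) hω,
    div_mul_cancel₀ π hL, mul_zero, intervalIntegral.integral_symm, integral_sin_add_cos_sq,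
    smul_eq_mul]
  field_simp

end logTrig

section veps

variable {ε x : ℝ}

theorem veps_eq_zero_of_le (h : x ≤ ε) : veps ε x = 0 := if_pos h

theorem veps_eq_of_lt (h : ε < x) : veps ε x = x ^ (1 / 2 : ℝ) * logTrig (π / log ε) 1 0 x := by
  simp [veps, h.not_ge, logTrig, sqrt_eq_rpow, mul_div_right_comm]

theorem deriv_veps_of_lt (h : x < ε) : deriv (veps ε) x = 0 := by
  have heq : veps ε =ᶠ[nhds x] fun _ => 0 :=
    eventually_of_mem (Iio_mem_nhds h) fun y hy => veps_eq_zero_of_le (le_of_lt hy)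
  rw [heq.deriv_eq, deriv_const]

theorem deriv_veps_of_gt (hε : 0 < ε) (h : ε < x) :
    deriv (veps ε) x = x ^ (1 / 2 - 1 : ℝ) * logTrig (π / log ε) (1 / 2) (π / log ε) x := by
  have heq : veps ε =ᶠ[nhds x] fun y => y ^ (1 / 2 : ℝ) * logTrig (π / log ε) 1 0 y :=
    eventually_of_mem (Ioi_mem_nhds h) fun y hy => veps_eq_of_lt hy
  rw [heq.deriv_eq, (hasDerivAt_rpow_mul_logTrig (hε.trans h)).deriv]
  norm_num

theorem deriv_deriv_veps_of_gt (hε : 0 < ε) (h : ε < x) :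
    deriv (deriv (veps ε)) x
      = x ^ (1 / 2 - 1 - 1 : ℝ) * logTrig (π / log ε) (-(1 / 4 + (π / log ε) ^ 2)) 0 x := by
  have heq : deriv (veps ε) =ᶠ[nhds x]
      fun y => y ^ (1 / 2 - 1 : ℝ) * logTrig (π / log ε) (1 / 2) (π / log ε) y :=
    eventually_of_mem (Ioi_mem_nhds h) fun y hy => deriv_veps_of_gt hε hy
  rw [heq.deriv_eq, (hasDerivAt_rpow_mul_logTrig (hε.trans h)).deriv]
  congr 2 <;> ring

theorem veps_sq_div_sq_eqOn (hε : 0 < ε) :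
    EqOn (fun x => veps ε x ^ 2 / x ^ 2) (fun x => x⁻¹ * logTrig (π / log ε) 1 0 x ^ 2)
      (Ioi ε) := fun x (h : ε < x) => by
  have hx := hε.trans h
  simp only [veps_eq_of_lt h, rpow_mul_sq hx.le]
  norm_num
  field_simp

theorem deriv_veps_sq_eqOn (hε : 0 < ε) :
    EqOn (fun x => deriv (veps ε) x ^ 2)
      (fun x => x⁻¹ * logTrig (π / log ε) (1 / 2) (π / log ε) x ^ 2) (Ioi ε) :=
  fun x (h : ε < x) => by
  simp only [deriv_veps_of_gt hε h, rpow_mul_sq (hε.trans h).le]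
  norm_num [rpow_neg_one]

theorem deriv_deriv_veps_sq_mul_sq_eqOn (hε : 0 < ε) :
    EqOn (fun x => deriv (deriv (veps ε)) x ^ 2 * x ^ 2)
      (fun x => x⁻¹ * logTrig (π / log ε) (-(1 / 4 + (π / log ε) ^ 2)) 0 x ^ 2) (Ioi ε) :=
  fun x (h : ε < x) => by
  have hx := hε.trans h
  simp only [deriv_deriv_veps_of_gt hε h, rpow_mul_sq hx.le]
  norm_num [rpow_neg]
  field_simp

end veps

section integrals

variable {ε α β : ℝ} {f : ℝ → ℝ}

theorem integral_eq_of_eqOn_inv_mul_logTrig_sq (hε : 0 < ε) (hε1 : ε ≤ 1)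
    (hf : EqOn f (fun x => x⁻¹ * logTrig (π / log ε) α β x ^ 2) (Ioo ε 1)) :
    ∫ x in ε..1, f x = -log ε / 2 * (α ^ 2 + β ^ 2) := by
  rw [intervalIntegral.integral_congr_Ioo_of_le hε1 hf, integral_inv_mul_logTrig_sq hε]

theorem integral_zero_one_eq_of_eqOn_inv_mul_logTrig_sq (hε : 0 < ε) (hε1 : ε ≤ 1)
    (hf0 : EqOn f 0 (Ioo 0 ε))
    (hf : EqOn f (fun x => x⁻¹ * logTrig (π / log ε) α β x ^ 2) (Ioo ε 1)) :
    ∫ x in (0:ℝ)..1, f x = -log ε / 2 * (α ^ 2 + β ^ 2) := by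
  have hint : IntervalIntegrable f volume ε 1 :=
    ((continuousOn_inv_mul_logTrig_sq hε one_pos).intervalIntegrable).congr_uIoo
      (uIoo_of_le hε1 ▸ hf.symm)
  rw [integral_eq_of_eqOn_zero hε.le hf0 hint, integral_eq_of_eqOn_inv_mul_logTrig_sq hε hε1 hf]

end integrals

theorem veps_norms (ε : ℝ) (hε : ε ∈ Set.Ioo (0:ℝ) 1) :
    (∫ x in (0:ℝ)..1, (veps ε x) ^ 2 / x ^ 2) = |Real.log ε| / 2 ∧
    (∫ x in (0:ℝ)..1, (deriv (veps ε) x) ^ 2)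
      = (|Real.log ε| / 2) * (1/4 + π ^ 2 / (Real.log ε) ^ 2) ∧
    (∫ x in ε..1, (deriv (deriv (veps ε)) x) ^ 2 * x ^ 2)
      = |Real.log ε| / 32 + π ^ 2 / (4 * |Real.log ε|) + π ^ 4 / (2 * |Real.log ε| ^ 3) := by
  obtain ⟨hε0, hε1⟩ := hε
  have hL : log ε < 0 := log_neg hε0 hε1
  rw [abs_of_neg hL]
  refine ⟨?_, ?_, ?_⟩
  · rw [integral_zero_one_eq_of_eqOn_inv_mul_logTrig_sq hε0 hε1.le
      (fun x hx => by simp [veps_eq_zero_of_le hx.2.le])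
      ((veps_sq_div_sq_eqOn hε0).mono Ioo_subset_Ioi_self)]
    ring
  · rw [integral_zero_one_eq_of_eqOn_inv_mul_logTrig_sq hε0 hε1.le
      (fun x hx => by simp [deriv_veps_of_lt hx.2])
      ((deriv_veps_sq_eqOn hε0).mono Ioo_subset_Ioi_self)]
    ring
  · rw [integral_eq_of_eqOn_inv_mul_logTrig_sq hε0 hε1.le
      ((deriv_deriv_veps_sq_mul_sq_eqOn hε0).mono Ioo_subset_Ioi_self)]
    have hL0 := hL.ne
    field_simp
    ring
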